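/- Let S₁ and S₂ be nonempty closed convex subsets of a real Hilbert space H with metric projections P₁ : H → S₁ and P₂ : H → S₂, and let d(S₁, S₂) := inf{‖u − v‖ : u ∈ S₁, v ∈ S₂}. For an arbitrary x₀ ∈ H define the alternating projection sequence by x_{2n+1} = P₁(x_{2n}) and x_{2n+2} = P₂(x_{2n+1}). Then lim_{n→∞} ‖x_{2n+2} − x_{2n+1}‖ = lim_{n→∞} ‖x_{2n+1} − x_{2n}‖ = d(S₁, S₂). -/

import Mathlib

open Filter

def IsProjOn {H : Type*} [NormedAddCommGroup H] (P : H → H) (C : Set H) : Prop :=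
  ∀ x : H, P x ∈ C ∧ ∀ y ∈ C, ‖x - P x‖ ≤ ‖x - y‖

noncomputable def setDist {H : Type*} [NormedAddCommGroup H] (A B : Set H) : ℝ :=
  sInf {d : ℝ | ∃ u ∈ A, ∃ v ∈ B, d = ‖u - v‖}

/-!
Write `x` for the alternating projection sequence and let `y` be the sequence generated by the
same projections from a point `v ∈ S₂`. For a projection onto a convex set,
`‖P a - P b‖² + ‖(a - P a) - (b - P b)‖² ≤ ‖a - b‖²`, so `‖x n - y n‖²` decreases and the
differences of the steps, `(x n - x (n+1)) - (y n - y (n+1))`, tend to `0`. The step lengths of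
both sequences are nonincreasing, and those of `y` are bounded by `‖u - v‖` for any `u ∈ S₁`,
so the limit of the step lengths of `x` is at most `‖u - v‖`, hence at most `setDist S₁ S₂`;
it is at least `setDist S₁ S₂` because consecutive iterates lie in different sets.
-/

open Topology
open scoped RealInnerProductSpace

def FirmlyNonexpansive {H : Type*} [NormedAddCommGroup H] (T : H → H) : Prop :=
  ∀ x y, ‖T x - T y‖ ^ 2 + ‖(x - T x) - (y - T y)‖ ^ 2 ≤ ‖x - y‖ ^ 2

def orbit {H : Type*} (T : ℕ → H → H) (x₀ : H) : ℕ → H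
  | 0 => x₀
  | n + 1 => T n (orbit T x₀ n)

def alternate {α : Type*} (a b : α) (n : ℕ) : α :=
  if Even n then a else b

theorem alternate_add_one {α : Type*} (a b : α) (n : ℕ) :
    alternate a b (n + 1) = alternate b a n := by
  by_cases h : Even n <;> simp [alternate, Nat.even_add_one, h]

theorem alternate_add_two {α : Type*} (a b : α) (n : ℕ) :
    alternate a b (n + 2) = alternate a b n := by
  rw [alternate_add_one, alternate_add_one]

section SetDist

variable {H : Type*} [NormedAddCommGroup H] {A B : Set H}

theorem setDist_le_norm_sub {u v : H} (hu : u ∈ A) (hv : v ∈ B) : setDist A B ≤ ‖u - v‖ :=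
  csInf_le ⟨0, by rintro _ ⟨_, _, _, _, rfl⟩; exact norm_nonneg _⟩ ⟨u, hu, v, hv, rfl⟩

theorem le_setDist {c : ℝ} (hA : A.Nonempty) (hB : B.Nonempty)
    (h : ∀ u ∈ A, ∀ v ∈ B, c ≤ ‖u - v‖) : c ≤ setDist A B := by
  obtain ⟨u, hu⟩ := hA
  obtain ⟨v, hv⟩ := hB
  refine le_csInf ⟨_, u, hu, v, hv, rfl⟩ ?_
  rintro _ ⟨u, hu, v, hv, rfl⟩
  exact h u hu v hv

theorem setDist_le_norm_sub_of_mem_alternate {u v : H} {n : ℕ} (hu : u ∈ alternate A B n)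
    (hv : v ∈ alternate A B (n + 1)) : setDist A B ≤ ‖u - v‖ := by
  rw [alternate_add_one] at hv
  by_cases h : Even n
  · simp only [alternate, h, if_true] at hu hv
    exact setDist_le_norm_sub hu hv
  · simp only [alternate, h, if_false] at hu hv
    rw [norm_sub_rev]
    exact setDist_le_norm_sub hv hu

end SetDist

namespace IsProjOn

variable {H : Type*} [NormedAddCommGroup H] {C : Set H} {P : H → H}

theorem nonempty (hP : IsProjOn P C) [Nonempty H] : C.Nonempty :=
  ⟨_, (hP (Classical.arbitrary H)).1⟩

theorem alternate {D : Set H} {Q : H → H} (hP : IsProjOn P C) (hQ : IsProjOn Q D) (n : ℕ) :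
    IsProjOn (alternate P Q n) (alternate C D n) := by
  unfold _root_.alternate; split <;> assumption

variable [InnerProductSpace ℝ H]

theorem real_inner_sub_le_zero (hC : Convex ℝ C) (hP : IsProjOn P C) (x : H) {y : H}
    (hy : y ∈ C) : ⟪x - P x, y - P x⟫ ≤ 0 := by
  have : Nonempty C := ⟨⟨y, hy⟩⟩
  have hinf : ‖x - P x‖ = ⨅ w : C, ‖x - w‖ :=
    le_antisymm (le_ciInf fun w => (hP x).2 w w.2)
      (ciInf_le ⟨0, by rintro _ ⟨_, rfl⟩; exact norm_nonneg _⟩ (⟨P x, (hP x).1⟩ : C))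
  exact (norm_eq_iInf_iff_real_inner_le_zero hC (hP x).1).1 hinf y hy

theorem firmlyNonexpansive (hC : Convex ℝ C) (hP : IsProjOn P C) : FirmlyNonexpansive P := by
  intro x y
  have hx := hP.real_inner_sub_le_zero hC x (hP y).1
  have hy := hP.real_inner_sub_le_zero hC y (hP x).1
  have hnonneg : 0 ≤ ⟪(x - P x) - (y - P y), P x - P y⟫ := by
    rw [← neg_sub (P x) (P y), inner_neg_right] at hx
    rw [inner_sub_left]
    linarith
  have hsplit : x - y = (P x - P y) + ((x - P x) - (y - P y)) := by abel
  rw [hsplit, norm_add_sq_real, real_inner_comm]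
  linarith

end IsProjOn

section Orbits

variable {H : Type*} [NormedAddCommGroup H] {T : ℕ → H → H} {x : ℕ → H}

theorem antitone_norm_succ_sub_of_isProjOn {C : ℕ → Set H} (hT : ∀ n, IsProjOn (T n) (C n))
    (hC : ∀ n, C (n + 2) = C n) (hx : ∀ n, x (n + 1) = T n (x n)) (h0 : x 0 ∈ C 1) :
    Antitone fun n => ‖x (n + 1) - x n‖ := by
  have hmem : ∀ n, x n ∈ C (n + 1) := by
    intro n
    induction n with
    | zero => exact h0
    | succ n _ => rw [hx, hC]; exact (hT n _).1
  refine antitone_nat_of_succ_le fun n => ?_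
  show ‖x (n + 2) - x (n + 1)‖ ≤ _
  rw [hx (n + 1), norm_sub_rev]
  exact (hT (n + 1) _).2 _ (hmem n)

theorem tendsto_norm_sub_sub_of_firmlyNonexpansive (hT : ∀ n, FirmlyNonexpansive (T n))
    {y : ℕ → H} (hx : ∀ n, x (n + 1) = T n (x n)) (hy : ∀ n, y (n + 1) = T n (y n)) :
    Tendsto (fun n => ‖(x n - x (n + 1)) - (y n - y (n + 1))‖) atTop (𝓝 0) := by
  set c : ℕ → ℝ := fun n => ‖x n - y n‖ ^ 2
  have hfirm : ∀ n, c (n + 1) + ‖(x n - x (n + 1)) - (y n - y (n + 1))‖ ^ 2 ≤ c n := by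
    intro n
    simp only [c, hx, hy]
    exact hT n (x n) (y n)
  have hc : Antitone c :=
    antitone_nat_of_succ_le fun n => by nlinarith [hfirm n]
  have hlim := tendsto_atTop_ciInf hc ⟨0, by rintro _ ⟨n, rfl⟩; positivity⟩
  have hdiff : Tendsto (fun n => c n - c (n + 1)) atTop (𝓝 0) := by
    simpa using hlim.sub ((tendsto_add_atTop_iff_nat 1).2 hlim)
  have hsqrt := hdiff.sqrt
  rw [Real.sqrt_zero] at hsqrt
  refine squeeze_zero (fun n => norm_nonneg _) (fun n => ?_) hsqrt
  rw [← Real.sqrt_sq (norm_nonneg _)]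
  exact Real.sqrt_le_sqrt (by linarith [hfirm n])

theorem le_of_tendsto_norm_succ_sub (hT : ∀ n, FirmlyNonexpansive (T n)) {y : ℕ → H}
    (hx : ∀ n, x (n + 1) = T n (x n)) (hy : ∀ n, y (n + 1) = T n (y n)) {L M : ℝ}
    (hL : Tendsto (fun n => ‖x (n + 1) - x n‖) atTop (𝓝 L))
    (hM : ∀ n, ‖y (n + 1) - y n‖ ≤ M) : L ≤ M := by
  have hbound : ∀ n, ‖x (n + 1) - x n‖ ≤ M + ‖(x n - x (n + 1)) - (y n - y (n + 1))‖ := by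
    intro n
    have hsplit : x (n + 1) - x n =
        (y (n + 1) - y n) - ((x n - x (n + 1)) - (y n - y (n + 1))) := by
      abel
    rw [hsplit]
    linarith [norm_sub_le (y (n + 1) - y n) ((x n - x (n + 1)) - (y n - y (n + 1))), hM n]
  have hM' := (tendsto_norm_sub_sub_of_firmlyNonexpansive hT hx hy).const_add M
  rw [add_zero] at hM'
  exact le_of_tendsto_of_tendsto' hL hM' hbound

end Orbits

section AlternatingProjections

variable {H : Type*} [NormedAddCommGroup H] [InnerProductSpace ℝ H] {S₁ S₂ : Set H}
  {P₁ P₂ : H → H} {x : ℕ → H}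

theorem le_norm_sub_of_tendsto_norm_succ_sub (hcv₁ : Convex ℝ S₁) (hcv₂ : Convex ℝ S₂)
    (hP₁ : IsProjOn P₁ S₁) (hP₂ : IsProjOn P₂ S₂) (hx : ∀ n, x (n + 1) = alternate P₁ P₂ n (x n))
    {L : ℝ} (hL : Tendsto (fun n => ‖x (n + 1) - x n‖) atTop (𝓝 L)) {u v : H} (hu : u ∈ S₁)
    (hv : v ∈ S₂) : L ≤ ‖u - v‖ := by
  have hfirm n : FirmlyNonexpansive (alternate P₁ P₂ n) := by
    unfold alternate; split
    exacts [hP₁.firmlyNonexpansive hcv₁, hP₂.firmlyNonexpansive hcv₂]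
  set y := orbit (alternate P₁ P₂) v
  have hy n : y (n + 1) = alternate P₁ P₂ n (y n) := rfl
  have hyanti := antitone_norm_succ_sub_of_isProjOn (hP₁.alternate hP₂)
    (alternate_add_two S₁ S₂) hy (by rw [alternate_add_one]; simpa [alternate, y, orbit] using hv)
  refine le_of_tendsto_norm_succ_sub hfirm hx hy hL fun n => ?_
  calc ‖y (n + 1) - y n‖ ≤ ‖y 1 - y 0‖ := hyanti (Nat.zero_le n)
    _ = ‖v - P₁ v‖ := by simp [norm_sub_rev, y, orbit, alternate]
    _ ≤ ‖u - v‖ := by rw [norm_sub_rev u]; exact (hP₁ v).2 u hu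

theorem tendsto_norm_succ_sub_setDist (hcv₁ : Convex ℝ S₁) (hcv₂ : Convex ℝ S₂)
    (hP₁ : IsProjOn P₁ S₁) (hP₂ : IsProjOn P₂ S₂) (hx : ∀ n, x (n + 1) = alternate P₁ P₂ n (x n)) :
    Tendsto (fun n => ‖x (n + 1) - x n‖) atTop (𝓝 (setDist S₁ S₂)) := by
  have hT := hP₁.alternate hP₂
  have hC := alternate_add_two S₁ S₂
  have hx1 : x 1 ∈ alternate S₁ S₂ 2 := by rw [hx, hC]; exact (hT 0 _).1
  have hanti : Antitone fun n => ‖x (n + 2) - x (n + 1)‖ :=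
    antitone_norm_succ_sub_of_isProjOn (x := fun n => x (n + 1)) (fun n => hT (n + 1))
      (fun n => hC (n + 1)) (fun n => hx (n + 1)) hx1
  have hlower n : setDist S₁ S₂ ≤ ‖x (n + 2) - x (n + 1)‖ := by
    rw [norm_sub_rev]
    exact setDist_le_norm_sub_of_mem_alternate (by rw [hx]; exact (hT n _).1)
      (by rw [hx]; exact (hT (n + 1) _).1)
  have hlim : Tendsto (fun n => ‖x (n + 1) - x n‖) atTop (𝓝 (⨅ n, ‖x (n + 2) - x (n + 1)‖)) :=
    (tendsto_add_atTop_iff_nat 1).1 <|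
      tendsto_atTop_ciInf hanti ⟨_, by rintro _ ⟨n, rfl⟩; exact hlower n⟩
  convert hlim using 2
  have : Nonempty H := ⟨x 0⟩
  exact le_antisymm (le_ciInf hlower) <| le_setDist hP₁.nonempty hP₂.nonempty fun u hu v hv =>
    le_norm_sub_of_tendsto_norm_succ_sub hcv₁ hcv₂ hP₁ hP₂ hx hlim hu hv

end AlternatingProjections

theorem stmt15_general {H : Type*} [NormedAddCommGroup H] [InnerProductSpace ℝ H]
    (S₁ S₂ : Set H)
    (hcv₁ : Convex ℝ S₁) (hcv₂ : Convex ℝ S₂)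
    (P₁ P₂ : H → H) (hP₁ : IsProjOn P₁ S₁) (hP₂ : IsProjOn P₂ S₂)
    (x : ℕ → H)
    (hodd : ∀ n : ℕ, x (2 * n + 1) = P₁ (x (2 * n)))
    (heven : ∀ n : ℕ, x (2 * n + 2) = P₂ (x (2 * n + 1))) :
    Tendsto (fun n : ℕ => ‖x (2 * n + 2) - x (2 * n + 1)‖) atTop (nhds (setDist S₁ S₂)) ∧
    Tendsto (fun n : ℕ => ‖x (2 * n + 1) - x (2 * n)‖) atTop (nhds (setDist S₁ S₂)) := by
  have hx n : x (n + 1) = alternate P₁ P₂ n (x n) := by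
    obtain ⟨k, rfl | rfl⟩ := Nat.even_or_odd' n
    · simpa [alternate] using hodd k
    · simpa [alternate, Nat.even_add_one] using heven k
  have hlim := tendsto_norm_succ_sub_setDist hcv₁ hcv₂ hP₁ hP₂ hx
  have h2 : Tendsto (fun n : ℕ => 2 * n) atTop atTop :=
    tendsto_id.const_mul_atTop' two_pos
  exact ⟨hlim.comp (tendsto_add_atTop_nat 1 |>.comp h2), hlim.comp h2⟩

/-- Kopecká–Reich: for alternating projections onto two nonempty closed convex subsets of
a real Hilbert space, the distances between consecutive iterates converge to the distance
between the two sets. -/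
theorem stmt15 {H : Type*} [NormedAddCommGroup H] [InnerProductSpace ℝ H] [CompleteSpace H]
    (S₁ S₂ : Set H) (hne₁ : S₁.Nonempty) (hne₂ : S₂.Nonempty)
    (hcl₁ : IsClosed S₁) (hcl₂ : IsClosed S₂)
    (hcv₁ : Convex ℝ S₁) (hcv₂ : Convex ℝ S₂)
    (P₁ P₂ : H → H) (hP₁ : IsProjOn P₁ S₁) (hP₂ : IsProjOn P₂ S₂)
    (x0 : H) (x : ℕ → H) (hx0 : x 0 = x0)
    (hodd : ∀ n : ℕ, x (2 * n + 1) = P₁ (x (2 * n)))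
    (heven : ∀ n : ℕ, x (2 * n + 2) = P₂ (x (2 * n + 1))) :
    Tendsto (fun n : ℕ => ‖x (2 * n + 2) - x (2 * n + 1)‖) atTop (nhds (setDist S₁ S₂)) ∧
    Tendsto (fun n : ℕ => ‖x (2 * n + 1) - x (2 * n)‖) atTop (nhds (setDist S₁ S₂)) :=
  stmt15_general S₁ S₂ hcv₁ hcv₂ P₁ P₂ hP₁ hP₂ x hodd heven
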